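/- arXiv:2203.13162 — 3 statements merged into one kernel-verified Lean document; each statement's English description precedes it below -/
import Mathlib

section
/- The image of the spherical helicoid of pitch 1 is the preimage under the Hopf fibration of a great circle (a Clifford torus): range(φ₁) = {(z,w) ∈ S³ : Im(z·conj(w)) = 0}. -/
/-!
For pitch one both coordinates of `φ₁(u, v)` carry the same phase `e^{iv}`, so `φ₁(u, v)` is the
real unit vector `(cos u, sin u)` rotated by `e^{iv}`. Conversely, `Im (z w̄) = 0` says exactly
that `z` and `w` are real multiples of one common unit complex number, and the sphere condition
then makes the pair of real coefficients a point `(cos u, sin u)` of the unit circle.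
-/

/-- The spherical helicoid of pitch `c`:
`φ_c(u,v) = (cos(u)·e^{icv}, sin(u)·e^{iv})`. -/
noncomputable def helicoid (c : ℝ) (q : ℝ × ℝ) : ℂ × ℂ :=
  ((Real.cos q.1 : ℂ) * Complex.exp (Complex.I * ((c : ℂ) * (q.2 : ℂ))),
   (Real.sin q.1 : ℂ) * Complex.exp (Complex.I * (q.2 : ℂ)))

open Complex ComplexConjugate

lemma Real.exists_cos_eq_and_sin_eq {a b : ℝ} (h : a ^ 2 + b ^ 2 = 1) :
    ∃ u : ℝ, Real.cos u = a ∧ Real.sin u = b := by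
  have hnorm : ‖(⟨a, b⟩ : ℂ)‖ = 1 := by
    rw [Complex.norm_def, Complex.normSq_mk, ← Real.sqrt_one, ← h]
    ring_nf
  refine ⟨arg ⟨a, b⟩, ?_, ?_⟩
  · simpa [hnorm] using norm_mul_cos_arg (⟨a, b⟩ : ℂ)
  · simpa [hnorm] using norm_mul_sin_arg (⟨a, b⟩ : ℂ)

namespace Complex

lemma norm_ofReal_mul_exp_mul_I (a v : ℝ) : ‖(a : ℂ) * exp (v * I)‖ = |a| := by
  rw [norm_mul, norm_exp_ofReal_mul_I, mul_one, norm_real, Real.norm_eq_abs]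

lemma norm_sq_add_norm_sq_ofReal_mul_exp_mul_I (a b v : ℝ) :
    ‖(a : ℂ) * exp (v * I)‖ ^ 2 + ‖(b : ℂ) * exp (v * I)‖ ^ 2 = a ^ 2 + b ^ 2 := by
  rw [norm_ofReal_mul_exp_mul_I, norm_ofReal_mul_exp_mul_I, sq_abs, sq_abs]

lemma ofReal_mul_exp_mul_I_mul_conj (a b v : ℝ) :
    (a : ℂ) * exp (v * I) * conj ((b : ℂ) * exp (v * I)) = (a * b : ℝ) := by
  have hunit : exp (v * I) * conj (exp (v * I)) = 1 := by
    rw [mul_conj, normSq_eq_norm_sq, norm_exp_ofReal_mul_I, one_pow, ofReal_one]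
  rw [map_mul, conj_ofReal, ofReal_mul]
  linear_combination (a : ℂ) * b * hunit

lemma exists_eq_ofReal_mul_of_im_mul_conj_eq_zero {z w : ℂ} (h : (z * conj w).im = 0)
    (hw : w ≠ 0) : ∃ r : ℝ, z = r * w := by
  refine ⟨(z * conj w).re / normSq w, ?_⟩
  have hreal : ((z * conj w).re : ℂ) = z * conj w := ext rfl (by simp [h])
  rw [ofReal_div, hreal, ← mul_conj, mul_div_mul_right _ _ ((map_ne_zero conj).mpr hw),
    div_mul_cancel₀ z hw]

lemma im_mul_conj_eq_zero_iff {z w : ℂ} :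
    (z * conj w).im = 0 ↔ ∃ a b v : ℝ, z = a * exp (v * I) ∧ w = b * exp (v * I) := by
  constructor
  · intro h
    by_cases hw : w = 0
    · exact ⟨‖z‖, 0, arg z, (norm_mul_exp_arg_mul_I z).symm, by simp [hw]⟩
    · obtain ⟨r, rfl⟩ := exists_eq_ofReal_mul_of_im_mul_conj_eq_zero h hw
      refine ⟨r * ‖w‖, ‖w‖, arg w, ?_, (norm_mul_exp_arg_mul_I w).symm⟩
      rw [ofReal_mul, mul_assoc, norm_mul_exp_arg_mul_I]
  · rintro ⟨a, b, v, rfl, rfl⟩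
    rw [ofReal_mul_exp_mul_I_mul_conj, ofReal_im]

end Complex

lemma helicoid_one_apply (u v : ℝ) :
    helicoid 1 (u, v) = (Real.cos u * exp (v * I), Real.sin u * exp (v * I)) := by
  simp only [helicoid, ofReal_one, one_mul, mul_comm I]

/-- The image of the spherical helicoid of pitch  is the Clifford torus: the
set of points of  where . -/
theorem helicoid_one_range :
    Set.range (helicoid 1) =
      {p : ℂ × ℂ | ‖p.1‖ ^ 2 + ‖p.2‖ ^ 2 = 1 ∧
        (p.1 * (starRingEnd ℂ) p.2).im = 0} := by
  ext ⟨z, w⟩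
  simp only [Set.mem_range, Set.mem_ofPred_eq, Prod.exists, im_mul_conj_eq_zero_iff]
  constructor
  · rintro ⟨u, v, huv⟩
    rw [helicoid_one_apply, Prod.mk.injEq] at huv
    obtain ⟨rfl, rfl⟩ := huv
    refine ⟨?_, _, _, v, rfl, rfl⟩
    rw [norm_sq_add_norm_sq_ofReal_mul_exp_mul_I, Real.cos_sq_add_sin_sq]
  · rintro ⟨hsphere, a, b, v, rfl, rfl⟩
    rw [norm_sq_add_norm_sq_ofReal_mul_exp_mul_I] at hsphere
    obtain ⟨u, rfl, rfl⟩ := Real.exists_cos_eq_and_sin_eq hsphere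
    exact ⟨u, v, helicoid_one_apply u v⟩
end

section
/- If c ∈ ℝ is irrational, then the image of the spherical helicoid of pitch c is dense in S³: the topological closure of range(φ_c) equals S³ = {(z,w) ∈ ℂ² : |z|² + |w|² = 1}. -/
/-!
Write a point of `S³` as `(cos u · e^{iα}, sin u · e^{iβ})`. By `2π`-periodicity,
`φ_c(u, β + 2πn) = (cos u · e^{i(cβ + x)}, sin u · e^{iβ})` for every `x = 2πcn + 2πm`, and these
`x` form a dense subgroup of `ℝ` when `c` is irrational. By continuity in `x`, the phase `α` is
reached in the closure.
-/

open Complex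
open scoped Real

lemma periodic_exp_I_mul_ofReal : Function.Periodic (fun x : ℝ => cexp (I * x)) (2 * π) := by
  intro x
  simp only [ofReal_add, ofReal_mul, ofReal_ofNat, mul_add, exp_add]
  rw [mul_comm I (2 * (π : ℂ)), exp_two_pi_mul_I, mul_one]

lemma helicoid_mem_sphere (c : ℝ) (q : ℝ × ℝ) :
    ‖(helicoid c q).1‖ ^ 2 + ‖(helicoid c q).2‖ ^ 2 = 1 := by
  have hcv : I * ((c : ℂ) * (q.2 : ℂ)) = I * ((c * q.2 : ℝ) : ℂ) := by push_cast; rfl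
  simp only [helicoid, hcv, norm_mul, norm_exp_I_mul_ofReal, norm_real, Real.norm_eq_abs,
    mul_one, sq_abs, Real.cos_sq_add_sin_sq]

lemma exists_eq_cos_mul_exp_sin_mul_exp {z w : ℂ} (h : ‖z‖ ^ 2 + ‖w‖ ^ 2 = 1) :
    ∃ u α β : ℝ, z = Real.cos u * cexp (I * α) ∧ w = Real.sin u * cexp (I * β) := by
  have hw : ‖w‖ ≤ 1 := by nlinarith [norm_nonneg z, norm_nonneg w]
  refine ⟨Real.arcsin ‖w‖, z.arg, w.arg, ?_, ?_⟩
  · have hz : Real.sqrt (1 - ‖w‖ ^ 2) = ‖z‖ := by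
      rw [← h, add_sub_cancel_right, Real.sqrt_sq (norm_nonneg z)]
    rw [Real.cos_arcsin, hz, mul_comm I, norm_mul_exp_arg_mul_I]
  · rw [Real.sin_arcsin (by linarith [norm_nonneg w]) hw, mul_comm I, norm_mul_exp_arg_mul_I]

lemma cos_mul_exp_sin_mul_exp_mem_range_helicoid (c u β : ℝ) {x : ℝ}
    (hx : x ∈ AddSubgroup.closure {2 * π * c, 2 * π}) :
    ((Real.cos u : ℂ) * cexp (I * (c * β + x : ℝ)), (Real.sin u : ℂ) * cexp (I * β)) ∈
      Set.range (helicoid c) := by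
  obtain ⟨n, m, rfl⟩ := AddSubgroup.mem_closure_pair.1 hx
  refine ⟨(u, β + n * (2 * π)), ?_⟩
  have hphase : c * β + (n • (2 * π * c) + m • (2 * π)) = c * (β + n * (2 * π)) + m * (2 * π) := by
    simp only [zsmul_eq_mul]; ring
  simp only [helicoid, hphase, periodic_exp_I_mul_ofReal.int_mul m _,
    periodic_exp_I_mul_ofReal.int_mul n β, ofReal_mul]

/-- If the pitch  is irrational, the image of the spherical helicoid of
pitch  is dense in the unit sphere . -/
theorem helicoid_irrational_dense (c : ℝ) (hc : Irrational c) :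
    closure (Set.range (helicoid c)) =
      {p : ℂ × ℂ | ‖p.1‖ ^ 2 + ‖p.2‖ ^ 2 = 1} := by
  refine subset_antisymm ?_ ?_
  · refine closure_minimal ?_ (isClosed_eq (by fun_prop) (by fun_prop))
    rintro _ ⟨q, rfl⟩
    exact helicoid_mem_sphere c q
  · rintro ⟨z, w⟩ hzw
    obtain ⟨u, α, β, rfl, rfl⟩ := exists_eq_cos_mul_exp_sin_mul_exp hzw
    have hdense : Dense (AddSubgroup.closure {2 * π * c, 2 * π} : Set ℝ) := by
      rw [dense_addSubgroupClosure_pair_iff, mul_div_cancel_left₀ c (by positivity)]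
      exact hc
    let γ : ℝ → ℂ × ℂ := fun x =>
      ((Real.cos u : ℂ) * cexp (I * (c * β + x : ℝ)), (Real.sin u : ℂ) * cexp (I * β))
    have hγ : γ (α - c * β) = (Real.cos u * cexp (I * α), Real.sin u * cexp (I * β)) := by
      simp only [γ, add_sub_cancel]
    rw [← hγ]
    refine closure_mono ?_ <| (by fun_prop : Continuous γ).range_subset_closure_image_dense
      hdense ⟨_, rfl⟩
    rintro _ ⟨x, hx, rfl⟩
    exact cos_mul_exp_sin_mul_exp_mem_range_helicoid c u β hx
end

section
/- Let κ > 0 and τ ≠ 0. Then: (i) Θ(x,y,z) lies in the unit sphere S³ = {(z,w) ∈ ℂ² : |z|² + |w|² = 1} for every (x,y,z) ∈ ℝ³, and Θ is periodic in z with period 8πτ/κ, i.e. Θ(x, y, z + 8πτ/κ) = Θ(x,y,z); (ii) the range of Θ is exactly S³ minus one Hopf fiber: range(Θ) = {(z,w) ∈ S³ : w ≠ 0}. -/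
/-!
`Θ(x, y, z)` is the point `(w e, e) / √(1 + |w|²)` with `w = (√κ/2)(y + ix)` and
`e = exp(iκz/(4τ))` a unit complex number, so it lies on `S³` and has a nonzero second
coordinate. Conversely `(a, b) ∈ S³` with `b ≠ 0` is recovered from `w = a/b`, for which
`1 + |w|² = |b|⁻²`, and `e = b/|b|`; any `w ∈ ℂ` is some `(√κ/2)(y + ix)` and any unit `e`
is some `exp(iκz/(4τ))`, the latter with period `8πτ/κ` in `z`.
-/

/-- The covering map `Θ : ℝ³ → ℂ²` onto the Berger sphere minus a fiber,
`Θ(x,y,z) = (1 + (κ/4)(x²+y²))^{−1/2} ((√κ/2)(y+ix)e^{iκz/(4τ)}, e^{iκz/(4τ)})`. -/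
noncomputable def ThetaBerger (κ τ : ℝ) (p : ℝ × ℝ × ℝ) : ℂ × ℂ :=
  (((Real.sqrt (1 + κ / 4 * (p.1 ^ 2 + p.2.1 ^ 2)))⁻¹ : ℂ) *
      (((Real.sqrt κ / 2 : ℝ) : ℂ) * ((p.2.1 : ℂ) + (p.1 : ℂ) * Complex.I)) *
      Complex.exp (Complex.I * ((κ * p.2.2 / (4 * τ) : ℝ) : ℂ)),
   ((Real.sqrt (1 + κ / 4 * (p.1 ^ 2 + p.2.1 ^ 2)))⁻¹ : ℂ) *
      Complex.exp (Complex.I * ((κ * p.2.2 / (4 * τ) : ℝ) : ℂ)))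

open Complex

noncomputable def hopfChart (w e : ℂ) : ℂ × ℂ :=
  (((√(1 + ‖w‖ ^ 2))⁻¹ : ℂ) * w * e, ((√(1 + ‖w‖ ^ 2))⁻¹ : ℂ) * e)

lemma norm_sq_add_norm_sq_hopfChart (w : ℂ) {e : ℂ} (he : ‖e‖ = 1) :
    ‖(hopfChart w e).1‖ ^ 2 + ‖(hopfChart w e).2‖ ^ 2 = 1 := by
  have hpos : 0 < 1 + ‖w‖ ^ 2 := by positivity
  simp only [hopfChart, norm_mul, norm_inv, he, mul_one, norm_real, Real.norm_eq_abs,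
    abs_of_nonneg (Real.sqrt_nonneg _), mul_pow, inv_pow, Real.sq_sqrt hpos.le]
  field_simp
  ring

lemma hopfChart_snd_ne_zero (w : ℂ) {e : ℂ} (he : e ≠ 0) : (hopfChart w e).2 ≠ 0 := by
  have : (√(1 + ‖w‖ ^ 2) : ℂ) ≠ 0 := by exact_mod_cast (Real.sqrt_pos.2 (by positivity)).ne'
  exact mul_ne_zero (inv_ne_zero this) he

lemma sqrt_one_add_norm_div_sq {a b : ℂ} (hab : ‖a‖ ^ 2 + ‖b‖ ^ 2 = 1) (hb : b ≠ 0) :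
    √(1 + ‖a / b‖ ^ 2) = ‖b‖⁻¹ := by
  have hb' : ‖b‖ ≠ 0 := norm_ne_zero_iff.2 hb
  rw [Real.sqrt_eq_iff_eq_sq (by positivity) (by positivity), norm_div]
  field_simp
  linarith

lemma hopfChart_div_exp_arg {a b : ℂ} (hab : ‖a‖ ^ 2 + ‖b‖ ^ 2 = 1) (hb : b ≠ 0) :
    hopfChart (a / b) (exp (arg b * I)) = (a, b) := by
  have hb' : (‖b‖ : ℂ) ≠ 0 := ofReal_ne_zero.2 (norm_ne_zero_iff.2 hb)
  have hexp : exp (arg b * I) = b / ‖b‖ := by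
    rw [eq_div_iff hb', mul_comm, norm_mul_exp_arg_mul_I]
  rw [hopfChart, sqrt_one_add_norm_div_sq hab hb, ofReal_inv, inv_inv, hexp]
  ext <;> field_simp

lemma norm_sqrt_div_two_mul_sq {κ : ℝ} (hκ : 0 ≤ κ) (x y : ℝ) :
    ‖((√κ / 2 : ℝ) : ℂ) * (y + x * I)‖ ^ 2 = κ / 4 * (x ^ 2 + y ^ 2) := by
  rw [norm_mul, mul_pow, norm_real, Real.norm_eq_abs, sq_abs, div_pow, Real.sq_sqrt hκ,
    Complex.sq_norm, normSq_add_mul_I]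
  ring

lemma thetaBerger_eq_hopfChart {κ : ℝ} (hκ : 0 ≤ κ) (τ x y z : ℝ) :
    ThetaBerger κ τ (x, y, z) =
      hopfChart (((√κ / 2 : ℝ) : ℂ) * (y + x * I)) (exp (I * ((κ * z / (4 * τ) : ℝ) : ℂ))) := by
  rw [hopfChart, norm_sqrt_div_two_mul_sq hκ]
  rfl

lemma exp_I_mul_add_period {κ τ : ℝ} (hκ : κ ≠ 0) (hτ : τ ≠ 0) (z : ℝ) :
    exp (I * ((κ * (z + 8 * Real.pi * τ / κ) / (4 * τ) : ℝ) : ℂ)) =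
      exp (I * ((κ * z / (4 * τ) : ℝ) : ℂ)) := by
  have h : κ * (z + 8 * Real.pi * τ / κ) / (4 * τ) = κ * z / (4 * τ) + 2 * Real.pi := by
    field_simp
    ring
  rw [h, ofReal_add, mul_add, exp_add, ofReal_mul, ofReal_ofNat, mul_comm I (2 * _),
    exp_two_pi_mul_I, mul_one]

lemma mk_mem_range_thetaBerger {κ τ : ℝ} (hκ : 0 < κ) (hτ : τ ≠ 0) {a b : ℂ}
    (hab : ‖a‖ ^ 2 + ‖b‖ ^ 2 = 1) (hb : b ≠ 0) : (a, b) ∈ Set.range (ThetaBerger κ τ) := by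
  set c : ℂ := ((2 / √κ : ℝ) : ℂ) * (a / b) with hc
  have hsqrt : (√κ : ℂ) ≠ 0 := ofReal_ne_zero.2 (Real.sqrt_pos.2 hκ).ne'
  have hw : ((√κ / 2 : ℝ) : ℂ) * (c.re + c.im * I) = a / b := by
    rw [re_add_im, hc]
    push_cast
    field_simp
  have hz : κ * (4 * τ * arg b / κ) / (4 * τ) = arg b := by
    field_simp
  refine ⟨(c.im, c.re, 4 * τ * arg b / κ), ?_⟩
  rw [thetaBerger_eq_hopfChart hκ.le, hw, hz, mul_comm I, hopfChart_div_exp_arg hab hb]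

/-- `Θ` maps into the unit sphere `S³`, is periodic in `z` with period `8πτ/κ`,
and its range is exactly `S³` minus one Hopf fiber, namely `{(z,w) ∈ S³ : w ≠ 0}`. -/
theorem thetaBerger_into_sphere_periodic_range (κ τ : ℝ) (hκ : 0 < κ) (hτ : τ ≠ 0) :
    (∀ p : ℝ × ℝ × ℝ,
        ‖(ThetaBerger κ τ p).1‖ ^ 2 + ‖(ThetaBerger κ τ p).2‖ ^ 2 = 1 ∧
        ThetaBerger κ τ (p.1, p.2.1, p.2.2 + 8 * Real.pi * τ / κ) = ThetaBerger κ τ p) ∧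
    Set.range (ThetaBerger κ τ) =
      {q : ℂ × ℂ | ‖q.1‖ ^ 2 + ‖q.2‖ ^ 2 = 1 ∧ q.2 ≠ 0} := by
  have hexp (z : ℝ) : ‖exp (I * ((κ * z / (4 * τ) : ℝ) : ℂ))‖ = 1 := by
    rw [mul_comm]
    exact norm_exp_ofReal_mul_I _
  have hsphere (p : ℝ × ℝ × ℝ) :
      ‖(ThetaBerger κ τ p).1‖ ^ 2 + ‖(ThetaBerger κ τ p).2‖ ^ 2 = 1 := by
    rw [thetaBerger_eq_hopfChart hκ.le]
    exact norm_sq_add_norm_sq_hopfChart _ (hexp _)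
  refine ⟨fun ⟨x, y, z⟩ => ⟨hsphere _, ?_⟩, ?_⟩
  · rw [thetaBerger_eq_hopfChart hκ.le, thetaBerger_eq_hopfChart hκ.le,
      exp_I_mul_add_period hκ.ne' hτ]
  · ext ⟨a, b⟩
    refine ⟨?_, fun ⟨hab, hb⟩ => mk_mem_range_thetaBerger hκ hτ hab hb⟩
    rintro ⟨⟨x, y, z⟩, hp⟩
    refine hp ▸ ⟨hsphere _, ?_⟩
    rw [thetaBerger_eq_hopfChart hκ.le]
    exact hopfChart_snd_ne_zero _ (exp_ne_zero _)
end
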